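/- Let P be a probability measure on a measurable space and X a real-valued measurable function. Then log E_P[exp(X)] = sup over Q in 𝒜 of ( E_Q[X] − H(Q,P) ), where 𝒜 is the set of probability measures Q with H(Q,P) < ∞ and E_Q[X⁻] < ∞. Moreover, if E_P[exp(X)] < ∞ and X is bounded above by n, the supremum is attained by the Gibbs measure dQ_n/dP = exp(X)/E_P[exp(X)]. -/

import Mathlib

open MeasureTheory ENNReal NNReal Real Filter Classical

noncomputable section

variable {Ω : Type*} [MeasurableSpace Ω]

/-- Relative entropy `H(Q,P) ∈ [0,∞]`, `+∞` if `Q` is not absolutely continuous w.r.t. `P`. -/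
def relEntropy (Q P : Measure Ω) : ℝ≥0∞ :=
  if Q ≪ P then
    (∫⁻ ω, ENNReal.ofReal ((Q.rnDeriv P ω).toReal * Real.log (Q.rnDeriv P ω).toReal + 1) ∂P) - 1
  else ⊤

/-- Robust relative entropy `H(Q,Pfam) = inf_{P ∈ Pfam} H(Q,P)`. -/
def robustEntropy (Q : Measure Ω) (Pfam : Set (Measure Ω)) : ℝ≥0∞ :=
  ⨅ P ∈ Pfam, relEntropy Q P

/-- Positive part of an extended real, valued in `ℝ≥0∞`. -/
def ePos (x : EReal) : ℝ≥0∞ := if x = ⊤ then ⊤ else ENNReal.ofReal x.toReal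

/-- Expectation `E_Q[X] = E_Q[X⁺] − E_Q[X⁻]` with value `−∞` when `E_Q[X⁻] = +∞`. -/
def eInt (Q : Measure Ω) (X : Ω → ℝ) : EReal :=
  if (∫⁻ ω, ENNReal.ofReal (-(X ω)) ∂Q) = ⊤ then ⊥
  else ((∫⁻ ω, ENNReal.ofReal (X ω) ∂Q : ℝ≥0∞) : EReal)
       - ((∫⁻ ω, ENNReal.ofReal (-(X ω)) ∂Q : ℝ≥0∞) : EReal)

/-- Expectation of an `EReal`-valued function, same convention. -/
def eIntE (Q : Measure Ω) (X : Ω → EReal) : EReal :=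
  if (∫⁻ ω, ePos (-(X ω)) ∂Q) = ⊤ then ⊥
  else ((∫⁻ ω, ePos (X ω) ∂Q : ℝ≥0∞) : EReal) - ((∫⁻ ω, ePos (-(X ω)) ∂Q : ℝ≥0∞) : EReal)

/-- `log E_P[exp X]` for real-valued `X`, valued in `EReal`. -/
def logMGF (P : Measure Ω) (X : Ω → ℝ) : EReal :=
  ENNReal.log (∫⁻ ω, ENNReal.ofReal (Real.exp (X ω)) ∂P)

/-- `log E_P[exp X]` for `EReal`-valued `X`. -/
def logMGFE (P : Measure Ω) (X : Ω → EReal) : EReal :=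
  ENNReal.log (∫⁻ ω, EReal.exp (X ω) ∂P)

/-- A set is `Pfam`-polar if it is null under every `P ∈ Pfam`. -/
def Polar (Pfam : Set (Measure Ω)) (N : Set Ω) : Prop := ∀ P ∈ Pfam, P N = 0

/-- No-arbitrage `NA(Pfam)` for a one-period market with increment `ΔS`. -/
def NA {d : ℕ} (Pfam : Set (Measure Ω)) (ΔS : Ω → Fin d → ℝ) : Prop :=
  ∀ h : Fin d → ℝ, Polar Pfam {ω : Ω | ∑ i, h i * ΔS ω i < 0} →
    Polar Pfam {ω : Ω | ∑ i, h i * ΔS ω i ≠ 0}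

/-- Convexity of a family of measures. -/
def ConvexFamily (Pfam : Set (Measure Ω)) : Prop :=
  ∀ P₁ ∈ Pfam, ∀ P₂ ∈ Pfam, ∀ t : ℝ≥0, t ≤ 1 →
    ((t : ℝ≥0∞) • P₁ + ((1 - t : ℝ≥0) : ℝ≥0∞) • P₂) ∈ Pfam

open InformationTheory

/-! `relEntropy` is Mathlib's `klDiv`, and the Gibbs measure is `P.tilted X`. When `X` is
`Q`-integrable and `exp X` is `P`-integrable, the log-likelihood ratio against the tilted measure
gives the identity `E_Q[X] - H(Q,P) = log E_P[exp X] - H(Q, P.tilted X)`, so Gibbs' inequality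
bounds the left side by `log E_P[exp X]`, with equality at `Q = P.tilted X`. Under `H(Q,P) < ∞`
and `E_P[exp X] < ∞`, the `Q`-integrability of `X⁺` comes from Young's inequality
`s t ≤ (s log s + 1 - s) + (exp t - 1)` integrated against `dQ/dP`. For the reverse inequality
with `X` unbounded, the Gibbs measures of the truncations `min X k` are admissible for `X`, and
`E_P[exp (min X k)]` increases to `E_P[exp X]`. -/

lemma mul_le_klFun_add_exp_sub_one {s : ℝ} (hs : 0 ≤ s) (t : ℝ) :
    s * t ≤ klFun s + (exp t - 1) := by
  rcases hs.eq_or_lt with rfl | hs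
  · simp [klFun_zero]; positivity
  · have h := mul_le_mul_of_nonneg_left (add_one_le_exp (t - log s)) hs.le
    rw [exp_sub, exp_log hs, mul_div_cancel₀ _ hs.ne'] at h
    rw [klFun_apply]
    nlinarith

lemma relEntropy_eq_klDiv (Q P : Measure Ω) [IsProbabilityMeasure Q] [IsFiniteMeasure P] :
    relEntropy Q P = klDiv Q P := by
  by_cases hQP : Q ≪ P
  swap
  · rw [relEntropy, if_neg hQP, klDiv_of_not_ac hQP]
  have h_split (s : ℝ) : s * log s + 1 = klFun s + s := by
    rw [klFun_apply]
    ring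
  have h_density : ∫⁻ ω, ENNReal.ofReal (Q.rnDeriv P ω).toReal ∂P = 1 := by
    rw [← measure_univ (μ := Q), ← Measure.lintegral_rnDeriv hQP]
    exact lintegral_congr_ae
      ((Measure.rnDeriv_lt_top Q P).mono fun ω h => ENNReal.ofReal_toReal h.ne)
  simp_rw [relEntropy, if_pos hQP, h_split]
  rw [lintegral_congr fun ω => ENNReal.ofReal_add (klFun_nonneg ENNReal.toReal_nonneg)
      ENNReal.toReal_nonneg, lintegral_add_left (by fun_prop), h_density,
    ← klDiv_eq_lintegral_klFun_of_ac hQP, ENNReal.add_sub_cancel_right ENNReal.one_ne_top]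

lemma lintegral_ofReal_le_klDiv_add_lintegral_exp {Q P : Measure Ω} [IsFiniteMeasure Q]
    [IsFiniteMeasure P] (hQP : Q ≪ P) {X : Ω → ℝ} (hX : Measurable X) :
    ∫⁻ ω, ENNReal.ofReal (X ω) ∂Q ≤ klDiv Q P + ∫⁻ ω, ENNReal.ofReal (exp (X ω)) ∂P := by
  have young (ω : Ω) : ENNReal.ofReal ((Q.rnDeriv P ω).toReal * X ω)
      ≤ ENNReal.ofReal (klFun (Q.rnDeriv P ω).toReal) + ENNReal.ofReal (exp (X ω)) := by
    refine (ENNReal.ofReal_le_ofReal ?_).trans ENNReal.ofReal_add_le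
    linarith [mul_le_klFun_add_exp_sub_one (ENNReal.toReal_nonneg (a := Q.rnDeriv P ω)) (X ω)]
  calc ∫⁻ ω, ENNReal.ofReal (X ω) ∂Q
      = ∫⁻ ω, Q.rnDeriv P ω * ENNReal.ofReal (X ω) ∂P :=
        (lintegral_rnDeriv_mul hQP hX.ennreal_ofReal.aemeasurable).symm
    _ = ∫⁻ ω, ENNReal.ofReal ((Q.rnDeriv P ω).toReal * X ω) ∂P := by
        refine lintegral_congr_ae ((Measure.rnDeriv_lt_top Q P).mono fun ω h => ?_)
        dsimp only
        rw [ENNReal.ofReal_mul ENNReal.toReal_nonneg, ENNReal.ofReal_toReal h.ne]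
    _ ≤ ∫⁻ ω, (ENNReal.ofReal (klFun (Q.rnDeriv P ω).toReal) + ENNReal.ofReal (exp (X ω))) ∂P :=
        lintegral_mono young
    _ = klDiv Q P + ∫⁻ ω, ENNReal.ofReal (exp (X ω)) ∂P := by
        rw [lintegral_add_left (by fun_prop), klDiv_eq_lintegral_klFun_of_ac hQP]

lemma integrable_of_lintegral_ofReal_ne_top {μ : Measure Ω} {X : Ω → ℝ} (hX : Measurable X)
    (hpos : ∫⁻ ω, ENNReal.ofReal (X ω) ∂μ ≠ ⊤) (hneg : ∫⁻ ω, ENNReal.ofReal (-X ω) ∂μ ≠ ⊤) :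
    Integrable X μ := by
  refine ⟨hX.aestronglyMeasurable, ?_⟩
  have habs (ω : Ω) : ‖X ω‖ₑ = ENNReal.ofReal (X ω) + ENNReal.ofReal (-X ω) := by
    rw [Real.enorm_eq_ofReal_abs]
    rcases le_total 0 (X ω) with h | h
    · simp [abs_of_nonneg h, ENNReal.ofReal_of_nonpos (neg_nonpos.2 h)]
    · simp [abs_of_nonpos h, ENNReal.ofReal_of_nonpos h]
  rw [HasFiniteIntegral, lintegral_congr habs, lintegral_add_left hX.ennreal_ofReal]
  exact ENNReal.add_lt_top.2 ⟨hpos.lt_top, hneg.lt_top⟩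

lemma MeasureTheory.Integrable.lintegral_ofReal_neg_ne_top {μ : Measure Ω} {X : Ω → ℝ}
    (hX : Integrable X μ) :
    ∫⁻ ω, ENNReal.ofReal (-X ω) ∂μ ≠ ⊤ :=
  ((lintegral_mono fun ω => Real.ofReal_le_enorm (-X ω)).trans_lt hX.neg.2).ne

lemma eInt_eq_integral {Q : Measure Ω} {X : Ω → ℝ} (hX : Integrable X Q) :
    eInt Q X = ((∫ ω, X ω ∂Q : ℝ) : EReal) := by
  have hpos : ∫⁻ ω, ENNReal.ofReal (X ω) ∂Q ≠ ⊤ :=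
    ((lintegral_mono fun ω => Real.ofReal_le_enorm (X ω)).trans_lt hX.2).ne
  rw [eInt, if_neg hX.lintegral_ofReal_neg_ne_top,
    integral_eq_lintegral_pos_part_sub_lintegral_neg_part hX, EReal.coe_sub,
    EReal.coe_ennreal_toReal hpos, EReal.coe_ennreal_toReal hX.lintegral_ofReal_neg_ne_top]

lemma eInt_mono {Q : Measure Ω} {X Y : Ω → ℝ} (hXY : X ≤ Y) : eInt Q X ≤ eInt Q Y := by
  have hneg : ∫⁻ ω, ENNReal.ofReal (-Y ω) ∂Q ≤ ∫⁻ ω, ENNReal.ofReal (-X ω) ∂Q :=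
    lintegral_mono fun ω => ENNReal.ofReal_le_ofReal (neg_le_neg (hXY ω))
  rw [eInt, eInt]
  by_cases hX : ∫⁻ ω, ENNReal.ofReal (-X ω) ∂Q = ⊤
  · rw [if_pos hX]
    exact bot_le
  have hY : ¬∫⁻ ω, ENNReal.ofReal (-Y ω) ∂Q = ⊤ := fun h => hX (top_le_iff.1 (h ▸ hneg))
  rw [if_neg hX, if_neg hY]
  exact EReal.sub_le_sub (EReal.coe_ennreal_le_coe_ennreal_iff.2
      (lintegral_mono fun ω => ENNReal.ofReal_le_ofReal (hXY ω)))
      (EReal.coe_ennreal_le_coe_ennreal_iff.2 hneg)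

lemma integrable_exp_of_lintegral_ne_top {P : Measure Ω} {X : Ω → ℝ} (hX : Measurable X)
    (hZ : ∫⁻ ω, ENNReal.ofReal (exp (X ω)) ∂P ≠ ⊤) : Integrable (fun ω => exp (X ω)) P :=
  (lintegral_ofReal_ne_top_iff_integrable (by fun_prop) (ae_of_all _ fun ω => (exp_pos _).le)).1 hZ

lemma integrable_exp_of_le {P : Measure Ω} [IsFiniteMeasure P] {X : Ω → ℝ} (hX : Measurable X)
    {n : ℝ} (hn : ∀ ω, X ω ≤ n) : Integrable (fun ω => exp (X ω)) P :=
  Integrable.of_bound (by fun_prop) (exp n) (ae_of_all _ fun ω => by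
    rw [Real.norm_of_nonneg (exp_pos _).le]; exact exp_le_exp.2 (hn ω))

lemma logMGF_eq_log_integral {P : Measure Ω} [NeZero P] {X : Ω → ℝ}
    (hX : Integrable (fun ω => exp (X ω)) P) :
    logMGF P X = ((log (∫ ω, exp (X ω) ∂P) : ℝ) : EReal) := by
  rw [logMGF, ← ofReal_integral_eq_lintegral_ofReal hX (ae_of_all _ fun ω => (exp_pos _).le),
    ENNReal.log_ofReal_of_pos (integral_exp_pos hX)]

theorem integral_sub_toReal_klDiv_eq {Q P : Measure Ω} [IsProbabilityMeasure Q]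
    [IsProbabilityMeasure P] (hQP : Q ≪ P) (h_llr : Integrable (llr Q P) Q) {X : Ω → ℝ}
    (hXQ : Integrable X Q) (hXP : Integrable (fun ω => exp (X ω)) P) :
    ∫ ω, X ω ∂Q - (klDiv Q P).toReal
      = log (∫ ω, exp (X ω) ∂P) - (klDiv Q (P.tilted X)).toReal := by
  have := isProbabilityMeasure_tilted hXP
  rw [toReal_klDiv hQP h_llr,
    toReal_klDiv (hQP.trans (absolutelyContinuous_tilted hXP))
      (integrable_llr_tilted_right hQP hXQ h_llr hXP),
    integral_llr_tilted_right hQP hXQ hXP h_llr]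
  simp only [probReal_univ]
  ring

theorem eInt_sub_relEntropy_le_logMGF {Q P : Measure Ω} [IsProbabilityMeasure Q]
    [IsProbabilityMeasure P] {X : Ω → ℝ} (hX : Measurable X) (hH : relEntropy Q P ≠ ⊤)
    (hneg : ∫⁻ ω, ENNReal.ofReal (-X ω) ∂Q ≠ ⊤) :
    eInt Q X - relEntropy Q P ≤ logMGF P X := by
  by_cases hZ : ∫⁻ ω, ENNReal.ofReal (exp (X ω)) ∂P = ⊤
  · rw [logMGF, hZ, ENNReal.log_top]
    exact le_top
  rw [relEntropy_eq_klDiv] at hH ⊢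
  obtain ⟨hQP, h_llr⟩ := klDiv_ne_top_iff.1 hH
  have hXQ : Integrable X Q := integrable_of_lintegral_ofReal_ne_top hX
    (ne_top_of_le_ne_top (ENNReal.add_ne_top.2 ⟨hH, hZ⟩)
      (lintegral_ofReal_le_klDiv_add_lintegral_exp hQP hX)) hneg
  have hXP := integrable_exp_of_lintegral_ne_top hX hZ
  rw [eInt_eq_integral hXQ, logMGF_eq_log_integral hXP, ← EReal.coe_ennreal_toReal hH,
    ← EReal.coe_sub, EReal.coe_le_coe_iff, integral_sub_toReal_klDiv_eq hQP h_llr hXQ hXP]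
  exact sub_le_self _ ENNReal.toReal_nonneg

lemma integrable_llr_tilted_self {P : Measure Ω} [SigmaFinite P] {X : Ω → ℝ}
    (hXP : Integrable (fun ω => exp (X ω)) P) (hXG : Integrable X (P.tilted X)) :
    Integrable (llr (P.tilted X) P) (P.tilted X) :=
  (hXG.sub (integrable_const _)).congr
    (EventuallyEq.symm <|
      (tilted_absolutelyContinuous P X).ae_le (log_rnDeriv_tilted_left_self hXP))

lemma integral_sub_toReal_klDiv_tilted_self {P : Measure Ω} [IsProbabilityMeasure P]
    {X : Ω → ℝ} (hXP : Integrable (fun ω => exp (X ω)) P) (hXG : Integrable X (P.tilted X)) :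
    ∫ ω, X ω ∂(P.tilted X) - (klDiv (P.tilted X) P).toReal = log (∫ ω, exp (X ω) ∂P) := by
  have := isProbabilityMeasure_tilted hXP
  rw [integral_sub_toReal_klDiv_eq (tilted_absolutelyContinuous P X)
    (integrable_llr_tilted_self hXP hXG) hXG hXP, klDiv_self, ENNReal.toReal_zero, sub_zero]

lemma integrable_tilted_of_le {P : Measure Ω} [IsFiniteMeasure P] {X : Ω → ℝ} (hX : Measurable X)
    (hXP : Integrable (fun ω => exp (X ω)) P) {n : ℝ} (hn : ∀ ω, X ω ≤ n) :
    Integrable X (P.tilted X) := by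
  rw [integrable_tilted_iff hXP]
  refine Integrable.of_bound (by fun_prop) (exp (2 * |n|)) (ae_of_all _ fun ω => ?_)
  have h_abs_le : |X ω| ≤ exp |X ω| := by linarith [add_one_le_exp |X ω|]
  calc ‖exp (X ω) • X ω‖ = exp (X ω) * |X ω| := by
        rw [smul_eq_mul, norm_mul, Real.norm_of_nonneg (exp_pos _).le, Real.norm_eq_abs]
    _ ≤ exp (X ω) * exp |X ω| := mul_le_mul_of_nonneg_left h_abs_le (exp_pos _).le
    _ ≤ exp (2 * |n|) := by
        rw [← exp_add, exp_le_exp]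
        have := hn ω
        rcases le_total 0 (X ω) with h | h
        · rw [abs_of_nonneg h]; linarith [le_abs_self n]
        · rw [abs_of_nonpos h]; linarith [abs_nonneg n]

lemma relEntropy_tilted_ne_top {P : Measure Ω} [IsProbabilityMeasure P] {X : Ω → ℝ}
    (hXP : Integrable (fun ω => exp (X ω)) P) (hXG : Integrable X (P.tilted X)) :
    relEntropy (P.tilted X) P ≠ ⊤ := by
  have := isProbabilityMeasure_tilted hXP
  rw [relEntropy_eq_klDiv]
  exact klDiv_ne_top (tilted_absolutelyContinuous P X) (integrable_llr_tilted_self hXP hXG)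

theorem logMGF_eq_eInt_tilted_sub_relEntropy {P : Measure Ω} [IsProbabilityMeasure P]
    {X : Ω → ℝ} (hXP : Integrable (fun ω => exp (X ω)) P) (hXG : Integrable X (P.tilted X)) :
    logMGF P X = eInt (P.tilted X) X - relEntropy (P.tilted X) P := by
  have hH := relEntropy_tilted_ne_top hXP hXG
  have := isProbabilityMeasure_tilted hXP
  rw [relEntropy_eq_klDiv] at hH ⊢
  rw [← EReal.coe_ennreal_toReal hH, eInt_eq_integral hXG, logMGF_eq_log_integral hXP,
    ← EReal.coe_sub, integral_sub_toReal_klDiv_tilted_self hXP hXG]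

lemma logMGF_eq_iSup_logMGF_min {P : Measure Ω} {X : Ω → ℝ} (hX : Measurable X) :
    logMGF P X = ⨆ k : ℕ, logMGF P (fun ω => min (X ω) k) := by
  have hsup (x : ℝ) : ENNReal.ofReal (exp x) = ⨆ k : ℕ, ENNReal.ofReal (exp (min x k)) :=
    le_antisymm (le_iSup_of_le ⌈x⌉₊ (by rw [min_eq_left (Nat.le_ceil x)]))
      (iSup_le fun k => ENNReal.ofReal_le_ofReal (exp_le_exp.2 (min_le_left _ _)))
  have hmono : Monotone fun (k : ℕ) ω => ENNReal.ofReal (exp (min (X ω) k)) :=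
    fun a b hab ω =>
      ENNReal.ofReal_le_ofReal (exp_le_exp.2 (min_le_min_left _ (by exact_mod_cast hab)))
  rw [logMGF, lintegral_congr fun ω => hsup (X ω), lintegral_iSup (fun k => by fun_prop) hmono]
  exact ENNReal.logOrderIso.map_iSup _

theorem logMGF_le_iSup_of_le {P : Measure Ω} [IsProbabilityMeasure P] {X Y : Ω → ℝ}
    (hY : Measurable Y) (hYX : Y ≤ X) {n : ℝ} (hn : ∀ ω, Y ω ≤ n) :
    logMGF P Y ≤ ⨆ (Q : Measure Ω) (_ : IsProbabilityMeasure Q ∧ relEntropy Q P ≠ ⊤ ∧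
      ∫⁻ ω, ENNReal.ofReal (-X ω) ∂Q ≠ ⊤), (eInt Q X - (relEntropy Q P : EReal)) := by
  have hYP : Integrable (fun ω => exp (Y ω)) P := integrable_exp_of_le hY hn
  have hYG := integrable_tilted_of_le hY hYP hn
  have hnegX : ∫⁻ ω, ENNReal.ofReal (-X ω) ∂(P.tilted Y) ≠ ⊤ :=
    ne_top_of_le_ne_top hYG.lintegral_ofReal_neg_ne_top
      (lintegral_mono fun ω => ENNReal.ofReal_le_ofReal (neg_le_neg (hYX ω)))
  refine le_iSup₂_of_le (P.tilted Y)
    ⟨isProbabilityMeasure_tilted hYP, relEntropy_tilted_ne_top hYP hYG, hnegX⟩ ?_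
  rw [logMGF_eq_eInt_tilted_sub_relEntropy hYP hYG]
  exact EReal.sub_le_sub (eInt_mono hYX) le_rfl

/-- Dual representation of the log-moment-generating functional
`log E_P[exp X] = sup_{Q ∈ 𝒜} (E_Q[X] − H(Q,P))`, with the supremum attained by the Gibbs
measure `dQ/dP = exp X / E_P[exp X]` when `E_P[exp X] < ∞` and `X` is bounded above. -/
theorem logMGF_eq_iSup_relEntropy
    (P : Measure Ω) [IsProbabilityMeasure P] (X : Ω → ℝ) (hX : Measurable X) :
    (logMGF P X =
      ⨆ (Q : Measure Ω) (_ : IsProbabilityMeasure Q ∧ relEntropy Q P ≠ ⊤ ∧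
          (∫⁻ ω, ENNReal.ofReal (-(X ω)) ∂Q) ≠ ⊤),
        (eInt Q X - (relEntropy Q P : EReal))) ∧
    (∀ n : ℝ, (∫⁻ ω, ENNReal.ofReal (Real.exp (X ω)) ∂P) ≠ ⊤ → (∀ ω, X ω ≤ n) →
      (letI G : Measure Ω :=
        P.withDensity (fun ω => ENNReal.ofReal (Real.exp (X ω) / ∫ ω', Real.exp (X ω') ∂P))
      IsProbabilityMeasure G ∧ relEntropy G P ≠ ⊤ ∧
        (∫⁻ ω, ENNReal.ofReal (-(X ω)) ∂G) ≠ ⊤ ∧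
        logMGF P X = eInt G X - (relEntropy G P : EReal))) := by
  refine ⟨le_antisymm ?_ ?_, fun n hZ hn => ?_⟩
  · rw [logMGF_eq_iSup_logMGF_min hX]
    exact iSup_le fun k => logMGF_le_iSup_of_le (hX.min measurable_const)
      (fun ω => min_le_left _ _) (fun ω => min_le_right _ (k : ℝ))
  · exact iSup₂_le fun Q ⟨_, hH, hneg⟩ => eInt_sub_relEntropy_le_logMGF hX hH hneg
  · have hXP := integrable_exp_of_lintegral_ne_top hX hZ
    have hXG := integrable_tilted_of_le hX hXP hn
    exact ⟨isProbabilityMeasure_tilted hXP, relEntropy_tilted_ne_top hXP hXG,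
      hXG.lintegral_ofReal_neg_ne_top, logMGF_eq_eInt_tilted_sub_relEntropy hXP hXG⟩

end
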